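/- arXiv:1810.08328 — 5 statements merged into one kernel-verified Lean document; each statement's English description precedes it below -/
import Mathlib

section
/- Let G be a finite group which is not isomorphic to an elementary abelian 2-group C₂ᵏ (for any k ≥ 0). Then the number i_2(G) of elements of G of order at most 2 satisfies i_2(G) ≤ (3/4)·|G|, i.e., 4·i_2(G) ≤ 3·|G|. -/
open Finset

lemma half_top {G : Type*} [Group G] [Finite G] (H : Subgroup G)
    (h2 : Nat.card G < 2 * Nat.card H) : H = ⊤ := by
  have hm := H.card_mul_index
  have hi : H.index ≠ 0 := H.index_ne_zero_of_finite
  rw [← Subgroup.index_eq_one]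
  by_contra hne
  have h2i : 2 ≤ H.index := by omega
  have : 2 * Nat.card H ≤ Nat.card H * H.index := by
    rw [two_mul]; nlinarith [Nat.card_pos (α := H)]
  omega

/-- Miller's bound: if a finite group `G` is not isomorphic to an elementary abelian
2-group `C₂ᵏ` (for any `k ≥ 0`), then the number `i₂(G)` of elements of order at most 2
satisfies `4·i₂(G) ≤ 3·|G|`. -/
theorem four_mul_involutions_le_three_mul_card (G : Type*) [Group G] [Finite G]
    (h : ¬ ∃ k : ℕ, Nonempty (G ≃* Multiplicative (Fin k → ZMod 2))) :
    4 * Nat.card {x : G // x ^ 2 = 1} ≤ 3 * Nat.card G := by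
  classical
  by_contra hlt
  push_neg at hlt
  cases nonempty_fintype G
  set S : Finset G := univ.filter (fun x => x ^ 2 = 1) with hS
  have hcardS : Nat.card {x : G // x ^ 2 = 1} = S.card := by
    rw [Nat.card_eq_fintype_card, Fintype.card_subtype]
  have hn : Nat.card G = Fintype.card G := Nat.card_eq_fintype_card
  set n := Fintype.card G
  have hlt' : 3 * n < 4 * S.card := by rw [hn, hcardS] at hlt; exact hlt
  -- every involution is central
  have claim1 : ∀ a : G, a ^ 2 = 1 → ∀ x : G, x * a = a * x := by
    intro a ha
    set B : Finset G := S.image (fun x => a * x) with hB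
    have hBcard : B.card = S.card := card_image_of_injective _ (mul_right_injective a)
    have hsub : S ∩ B ⊆ univ.filter (fun y => y ∈ Subgroup.centralizer {a}) := by
      intro y hy
      simp only [mem_inter, hS, hB, mem_filter, mem_image, mem_univ, true_and] at hy
      obtain ⟨hy2, x, hx2, rfl⟩ := hy
      simp only [mem_filter, mem_univ, true_and,
        Subgroup.mem_centralizer_singleton_iff]
      -- (a*x)^2 = 1 and x^2 = 1, a^2 = 1
      have ha' : a⁻¹ = a := inv_eq_of_mul_eq_one_right (by rw [← pow_two]; exact ha)
      have hx' : x⁻¹ = x := inv_eq_of_mul_eq_one_right (by rw [← pow_two]; exact hx2)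
      have h1 : a * x = (a * x)⁻¹ :=
        eq_inv_of_mul_eq_one_left (by rw [← pow_two]; exact hy2)
      rw [mul_inv_rev, hx', ha'] at h1
      rw [mul_assoc, ← h1]
    have hC : n < 2 * Nat.card (Subgroup.centralizer {a}) := by
      have h1 : (S ∪ B).card + (S ∩ B).card = S.card + B.card :=
        card_union_add_card_inter S B
      have h2 : (S ∪ B).card ≤ n := (card_le_card (subset_univ _)).trans_eq card_univ
      have h3 : (S ∩ B).card ≤ (univ.filter (fun y => y ∈ Subgroup.centralizer {a})).card :=
        card_le_card hsub
      have h4 : Nat.card (Subgroup.centralizer {a}) =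
          (univ.filter (fun y => y ∈ Subgroup.centralizer {a})).card := by
        rw [Nat.card_eq_fintype_card, Fintype.card_subtype]
      omega
    have := half_top _ (hn ▸ hC)
    intro x
    have hx : x ∈ Subgroup.centralizer {a} := this ▸ Subgroup.mem_top x
    exact (Subgroup.mem_centralizer_singleton_iff.mp hx)
  -- the involutions form a subgroup
  let H : Subgroup G :=
    { carrier := {x | x ^ 2 = 1}
      one_mem' := one_pow 2
      mul_mem' := by
        intro x y hx hy
        simp only [Set.mem_setOf_eq] at *
        have hc : Commute x y := claim1 y hy x
        rw [hc.mul_pow, hx, hy, one_mul]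
      inv_mem' := by
        intro x hx
        simp only [Set.mem_setOf_eq] at *
        rw [inv_pow, hx, inv_one] }
  have hHcard : Nat.card H = S.card := by
    rw [← hcardS]; rfl
  have hHtop : H = ⊤ := half_top H (by omega)
  have hsq : ∀ x : G, x ^ 2 = 1 := fun x => by
    have : x ∈ H := hHtop.symm ▸ Subgroup.mem_top x
    exact this
  exact h (by
    letI : CommGroup G := { mul_comm := fun a b => (claim1 b (hsq b) a) }
    letI : Module (ZMod 2) (Additive G) :=
      AddCommGroup.zmodModule (by intro x; exact hsq x)
    let b := Module.finBasis (ZMod 2) (Additive G)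
    exact ⟨Module.finrank (ZMod 2) (Additive G),
      ⟨(MulEquiv.multiplicativeAdditive G).symm.trans
        (AddEquiv.toMultiplicative b.equivFun.toAddEquiv)⟩⟩)
end

section
/- Let G be a finite group not isomorphic to any elementary abelian 2-group, and suppose the number i_2(G) of elements of order at most 2 satisfies i_2(G) = (3/4)·|G|. Then G is isomorphic to D₈ × C₂ᵏ for some k ≥ 0, where D₈ is the dihedral group of order 8. -/
/-!
Fix `y` with `y² ≠ 1`. Since `i₂(G) = 3|G|/4`, at least half of `G` consists of involutions `x`
with `yx` again an involution; each such `x` inverts `y`, so they all lie in a single coset of the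
centralizer `C(y)`. Hence `[G : C(y)] = 2` and every element outside `C(y)` is an involution;
counting involutions inside `C(y)` then shows that every non-involution of `C(y)` lies in
`y · {involutions of C(y)}`. So all non-involutions commute, share one square `c`, and none is
central.

Consequently `c` is a central involution and all squares and commutators lie in `{1, c}`. For any
`a` not commuting with `y`, the elements `y, a` generate a copy of `D₈`, `G = D₈ · Z(G)`, and
`D₈ ∩ Z(G) = {1, c}`. The centre is an elementary abelian `2`-group, so `Z(G) = ⟨c⟩ × E` with
`E ≅ C₂ᵏ`, and `G ≅ D₈ × E`.
-/

open Subgroup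

section CentralSquares

variable {G : Type*} [Group G]

theorem mul_eq_mul_mul_of_sq_mem_center {g h : G} (hg : g ^ 2 ∈ center G)
    (hhg : (h * g) ^ 2 ∈ center G) :
    g * h = (h ^ 2)⁻¹ * (h * g) ^ 2 * (g ^ 2)⁻¹ * (h * g) := by
  calc g * h = (h ^ 2)⁻¹ * (h * (h * g) ^ 2) * (g * (g ^ 2)⁻¹) := by simp only [pow_two]; group
    _ = _ := by
      rw [mem_center_iff.mp hhg h, mem_center_iff.mp (inv_mem hg) g]
      simp only [mul_assoc]
      rw [← mul_assoc h, mem_center_iff.mp (inv_mem hg) h, mul_assoc]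

theorem commute_or_mul_eq_mul_mul {c : G} (hc : c ∈ center G) (hc2 : c ^ 2 = 1)
    (hsq : ∀ g : G, g ^ 2 = 1 ∨ g ^ 2 = c) (g h : G) : Commute g h ∨ g * h = c * (h * g) := by
  have hZ : ∀ x : G, x ^ 2 ∈ center G := fun x ↦ (hsq x).elim (· ▸ one_mem _) (· ▸ hc)
  have hc' : c⁻¹ = c := inv_eq_of_mul_eq_one_right (pow_two c ▸ hc2)
  have key := mul_eq_mul_mul_of_sq_mem_center (hZ g) (hZ (h * g))
  rcases hsq g with hg | hg <;> rcases hsq h with hh | hh <;> rcases hsq (h * g) with hhg | hhg <;>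
    simp only [hg, hh, hhg, hc', inv_one, one_pow, mul_one, one_mul, ← mul_assoc, ← pow_two, hc2]
      at key <;>
    first | exact .inl key | exact .inr (key.trans (mul_assoc _ _ _))

theorem sq_ne_one_or_mul_sq_ne_one {y p : G} (hy : y ^ 2 ≠ 1) (hp : Commute p y) :
    p ^ 2 ≠ 1 ∨ (y * p) ^ 2 ≠ 1 :=
  or_iff_not_imp_left.mpr fun hp2 ↦ by rwa [hp.symm.mul_pow, not_not.mp hp2, mul_one]

end CentralSquares

section Dihedral

variable {G : Type*} [Group G] {n : ℕ} [NeZero n] {y a : G}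

theorem pow_zmod_val_add (hy : y ^ n = 1) (i j : ZMod n) :
    y ^ (i + j).val = y ^ i.val * y ^ j.val := by
  rw [ZMod.val_add, ← pow_eq_pow_mod _ hy, pow_add]

theorem pow_zmod_val_sub (hy : y ^ n = 1) (i j : ZMod n) :
    y ^ (j - i).val = (y ^ i.val)⁻¹ * y ^ j.val := by
  rw [eq_inv_mul_iff_mul_eq, ← pow_zmod_val_add hy, add_sub_cancel]

theorem pow_mul_eq_mul_inv_pow (ha : a ^ 2 = 1) (hay : a * y * a⁻¹ = y⁻¹) (k : ℕ) :
    y ^ k * a = a * (y ^ k)⁻¹ := by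
  have ha' : a⁻¹ = a := inv_eq_of_mul_eq_one_right (pow_two a ▸ ha)
  rw [← inv_pow, ← hay, conj_pow, ha']
  simp only [← mul_assoc, ← pow_two, ha, one_mul]

variable (y a) in
def dihedralHom (hy : y ^ n = 1) (ha : a ^ 2 = 1) (hay : a * y * a⁻¹ = y⁻¹) :
    DihedralGroup n →* G where
  toFun
    | .r i => y ^ i.val
    | .sr i => a * y ^ i.val
  map_one' := by rw [DihedralGroup.one_def]; simp
  map_mul' := by
    rintro (i | i) (j | j)
    · simp [DihedralGroup.r_mul_r, pow_zmod_val_add hy]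
    · simp [DihedralGroup.r_mul_sr, pow_zmod_val_sub hy, ← mul_assoc, pow_mul_eq_mul_inv_pow ha hay]
    · simp [DihedralGroup.sr_mul_r, pow_zmod_val_add hy, mul_assoc]
    · simp only [DihedralGroup.sr_mul_sr, pow_zmod_val_sub hy]
      rw [← mul_assoc, mul_assoc a, pow_mul_eq_mul_inv_pow ha hay, ← mul_assoc, ← pow_two, ha,
        one_mul]

@[simp]
theorem dihedralHom_r (hy : y ^ n = 1) (ha : a ^ 2 = 1) (hay : a * y * a⁻¹ = y⁻¹) (i : ZMod n) :
    dihedralHom y a hy ha hay (.r i) = y ^ i.val := rfl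

@[simp]
theorem dihedralHom_sr (hy : y ^ n = 1) (ha : a ^ 2 = 1) (hay : a * y * a⁻¹ = y⁻¹) (i : ZMod n) :
    dihedralHom y a hy ha hay (.sr i) = a * y ^ i.val := rfl

theorem dihedralHom_injective (hy : y ^ n = 1) (ha : a ^ 2 = 1) (hay : a * y * a⁻¹ = y⁻¹)
    (hn : orderOf y = n) (hya : ¬Commute a y) : Function.Injective (dihedralHom y a hy ha hay) := by
  refine (injective_iff_map_eq_one _).mpr ?_
  rintro (i | i) h
  · rw [dihedralHom_r] at h
    have hi : orderOf y ∣ i.val := orderOf_dvd_of_pow_eq_one h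
    rw [hn] at hi
    rw [(ZMod.val_eq_zero i).mp (Nat.eq_zero_of_dvd_of_lt hi (ZMod.val_lt i)), DihedralGroup.r_zero]
  · rw [dihedralHom_sr, ← eq_inv_iff_mul_eq_one] at h
    exact absurd (h ▸ ((Commute.refl y).pow_left _).inv_left) hya

end Dihedral

theorem DihedralGroup.eq_one_or_eq_r_two_of_commute {d : DihedralGroup 4}
    (h₁ : d * r 1 = r 1 * d) (h₂ : d * sr 0 = sr 0 * d) : d = 1 ∨ d = r 2 := by
  revert d; decide

section ElementaryAbelian

theorem exists_mulEquiv_prod_zmod_two {A : Type*} [CommGroup A] [Finite A]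
    (hA : ∀ a : A, a ^ 2 = 1) {c : A} (hc : c ≠ 1) :
    ∃ k, ∃ e : Multiplicative (ZMod 2) × Multiplicative (Fin k → ZMod 2) ≃* A,
      e (.ofAdd 1, 1) = c := by
  let _ : Module (ZMod 2) (Additive A) :=
    AddCommGroup.zmodModule fun a ↦ by rw [two_nsmul]; exact (pow_two a.toMul).symm.trans (hA _)
  have hc' : Additive.ofMul c ≠ 0 := hc
  obtain ⟨E, hE⟩ := (Submodule.span (ZMod 2) {Additive.ofMul c}).exists_isCompl
  let L : (ZMod 2 × (Fin (Module.finrank (ZMod 2) E) → ZMod 2)) ≃ₗ[ZMod 2] Additive A :=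
    ((LinearEquiv.toSpanNonzeroSingleton (ZMod 2) _ _ hc').prodCongr
      (Module.finBasis (ZMod 2) E).equivFun.symm).trans (Submodule.prodEquivOfIsCompl _ _ hE)
  refine ⟨_, (MulEquiv.prodMultiplicative _ _).symm.trans
    (AddEquiv.toMultiplicativeLeft L.toAddEquiv), ?_⟩
  simp [L]

open IsMulCommutative in
theorem exists_central_complement {G : Type*} [Group G] [Finite G]
    (hZ : ∀ z ∈ center G, z ^ 2 = 1) {c : G} (hcZ : c ∈ center G) (hc : c ≠ 1) :
    ∃ k, ∃ j : Multiplicative (Fin k → ZMod 2) →* G, Function.Injective j ∧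
      (∀ v, j v ∈ center G) ∧ (∀ v, j v ≠ c) ∧ ∀ z ∈ center G, ∃ v, z = j v ∨ z = c * j v := by
  obtain ⟨k, e, he⟩ := exists_mulEquiv_prod_zmod_two (A := center G)
    (fun z ↦ Subtype.ext (hZ z z.2)) (c := ⟨c, hcZ⟩) (fun h ↦ hc (congrArg Subtype.val h))
  refine ⟨k, (center G).subtype.comp (e.toMonoidHom.comp (.inr _ _)), fun v w h ↦ ?_,
    fun v ↦ (e (1, v)).2, fun v h ↦ ?_, fun z hz ↦ ?_⟩
  · simpa using e.injective (Subtype.ext h)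
  · have := e.injective (Subtype.ext (h.trans (congrArg Subtype.val he.symm)))
    exact (by decide : (1 : Multiplicative (ZMod 2)) ≠ .ofAdd 1)
      (by simpa using congrArg Prod.fst this)
  · obtain ⟨⟨s, v⟩, hsv⟩ := e.surjective ⟨z, hz⟩
    have hsplit : z = e (s, 1) * e (1, v) := by
      rw [← Subgroup.coe_mul, ← map_mul, Prod.mk_mul_mk, mul_one, one_mul, hsv]
    refine ⟨v, ?_⟩
    obtain rfl | rfl := (by decide : ∀ s : Multiplicative (ZMod 2), s = 1 ∨ s = .ofAdd 1) s
    · exact .inl (by simpa [← Prod.one_eq_mk] using hsplit)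
    · exact .inr (by simpa [he] using hsplit)

theorem exists_mulEquiv_prod_of_center {G H : Type*} [Group G] [Group H] [Finite G]
    (f : H →* G) (hf : Function.Injective f) {c : H} (hc : c ≠ 1)
    (hfc : ∀ d, f d ∈ center G ↔ d = 1 ∨ d = c) (hspan : ∀ g, ∃ d, f d * g ∈ center G)
    (hZ : ∀ z ∈ center G, z ^ 2 = 1) :
    ∃ k, Nonempty (G ≃* H × Multiplicative (Fin k → ZMod 2)) := by
  obtain ⟨k, j, hj, hjZ, hjc, hZj⟩ := exists_central_complement hZ ((hfc c).mpr (.inr rfl))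
    (fun h ↦ hc (hf (h.trans f.map_one.symm)))
  let φ := f.noncommCoprod j fun d v ↦ (mem_center_iff.mp (hjZ v)) (f d)
  have hφ : ∀ d v, φ (d, v) = f d * j v := fun _ _ ↦ rfl
  refine ⟨k, ⟨(MulEquiv.ofBijective φ ⟨?_, fun g ↦ ?_⟩).symm⟩⟩
  · refine (f.noncommCoprod_injective j _).mpr ⟨hf, hj, disjoint_def.mpr ?_⟩
    rintro - ⟨d, rfl⟩ ⟨v, hv⟩
    rcases (hfc d).mp (hv ▸ hjZ v) with rfl | rfl
    · exact f.map_one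
    · exact absurd hv (hjc v)
  · obtain ⟨d, hd⟩ := hspan g
    obtain ⟨v, hv | hv⟩ := hZj _ hd
    · exact ⟨(d⁻¹, v), by rw [hφ, map_inv, ← hv, inv_mul_cancel_left]⟩
    · exact ⟨(d⁻¹ * c, v), by rw [hφ, map_mul, map_inv, mul_assoc, ← hv, inv_mul_cancel_left]⟩

end ElementaryAbelian

section Counting

open Finset

variable {G : Type*} [Group G] {y : G}

theorem mul_mul_inv_eq_inv_of_sq_eq_one {x : G} (hx : x ^ 2 = 1) (hyx : (y * x) ^ 2 = 1) :
    x * y * x⁻¹ = y⁻¹ := by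
  rw [inv_eq_of_mul_eq_one_right (pow_two x ▸ hx)]
  exact eq_inv_of_mul_eq_one_right (by rw [← hyx, pow_two]; group)

theorem commute_inv_mul_of_mul_mul_inv_eq_inv {x₀ x : G} (hx₀ : x₀ * y * x₀⁻¹ = y⁻¹)
    (hx : x * y * x⁻¹ = y⁻¹) : x₀⁻¹ * x * y = y * (x₀⁻¹ * x) := by
  calc x₀⁻¹ * x * y = x₀⁻¹ * (x * y * x⁻¹) * x₀ * (x₀⁻¹ * x) := by group
    _ = y * (x₀⁻¹ * x) := by rw [hx, ← hx₀]; group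

theorem ne_of_sq_eq_one_of_mul_sq_eq_one {x : G} (hy : y ^ 2 ≠ 1) (hx : x ^ 2 = 1)
    (hyx : (y * x) ^ 2 = 1) : x * y ≠ y * x := fun hxy ↦ hy <| by
  rwa [Commute.mul_pow hxy.symm, hx, mul_one] at hyx

variable [Fintype G] [DecidableEq G]

variable (y) in
theorem two_mul_card_sq_eq_one_le :
    2 * #{x : G | x ^ 2 = 1} ≤ Fintype.card G + #{x : G | x ^ 2 = 1 ∧ (y * x) ^ 2 = 1} := by
  have hshift : #{x : G | (y * x) ^ 2 = 1} = #{x : G | x ^ 2 = 1} :=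
    card_nbij' (y * ·) (y⁻¹ * ·) (by intro x; simp) (by intro x; simp)
      (by intro x; simp) (by intro x; simp)
  have hunion := card_union_add_card_inter {x : G | x ^ 2 = 1} {x : G | (y * x) ^ 2 = 1}
  rw [← filter_and] at hunion
  have := card_le_univ (({x : G | x ^ 2 = 1} : Finset G) ∪ ({x : G | (y * x) ^ 2 = 1} : Finset G))
  omega

variable (y) in
theorem card_inverting_le_card_centralizer :
    #{x : G | x ^ 2 = 1 ∧ (y * x) ^ 2 = 1} ≤ #{x : G | x * y = y * x} := by
  obtain hT | ⟨x₀, hx₀⟩ := eq_empty_or_nonempty {x : G | x ^ 2 = 1 ∧ (y * x) ^ 2 = 1}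
  · simp [hT]
  refine card_le_card_of_injOn (x₀⁻¹ * ·) (fun x hx ↦ ?_) (mul_right_injective _).injOn
  simp only [coe_filter, mem_filter, mem_univ, true_and, Set.mem_ofPred_eq] at hx₀ hx ⊢
  exact commute_inv_mul_of_mul_mul_inv_eq_inv (mul_mul_inv_eq_inv_of_sq_eq_one hx₀.1 hx₀.2)
    (mul_mul_inv_eq_inv_of_sq_eq_one hx.1 hx.2)

theorem card_centralizer_of_card_sq_eq_one
    (hG : 4 * #{x : G | x ^ 2 = 1} = 3 * Fintype.card G) (hy : y ^ 2 ≠ 1) :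
    2 * #{x : G | x * y = y * x} = Fintype.card G ∧ ∀ x, x * y ≠ y * x → x ^ 2 = 1 := by
  have hsub : ({x : G | x ^ 2 = 1 ∧ (y * x) ^ 2 = 1} : Finset G) ⊆
      ({x : G | ¬x * y = y * x} : Finset G) :=
    monotone_filter_right _ fun x _ hx ↦ ne_of_sq_eq_one_of_mul_sq_eq_one hy hx.1 hx.2
  have hsplit := card_filter_add_card_filter_not (s := univ) (fun x : G ↦ x * y = y * x)
  have h₁ := two_mul_card_sq_eq_one_le y
  have h₂ := card_inverting_le_card_centralizer y
  have h₃ := card_le_card hsub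
  rw [card_univ] at hsplit
  have heq := eq_of_subset_of_card_le hsub (by omega)
  refine ⟨by omega, fun x hx ↦ ?_⟩
  have : x ∈ ({x : G | ¬x * y = y * x} : Finset G) := by simpa using hx
  rw [← heq] at this
  exact (mem_filter.mp this).2.1

theorem sq_eq_of_card_sq_eq_one (hG : 4 * #{x : G | x ^ 2 = 1} = 3 * Fintype.card G)
    (hy : y ^ 2 ≠ 1) {z : G} (hz : z ^ 2 ≠ 1) : z ^ 2 = y ^ 2 := by
  obtain ⟨hC, hout⟩ := card_centralizer_of_card_sq_eq_one hG hy
  have hS := card_filter_add_card_filter_not (s := {x : G | x ^ 2 = 1}) (fun x ↦ x * y = y * x)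
  have hC' := card_filter_add_card_filter_not (s := {x : G | x * y = y * x}) (fun x ↦ x ^ 2 = 1)
  have hCc := card_filter_add_card_filter_not (s := univ) (fun x : G ↦ x * y = y * x)
  rw [filter_comm] at hS
  simp only [filter_filter] at hS hC'
  rw [filter_congr (q := fun x ↦ ¬x * y = y * x) (fun x _ ↦ ⟨And.right, fun h ↦ ⟨hout x h, h⟩⟩)]
    at hS
  rw [card_univ] at hCc
  have hsub : ({x : G | x * y = y * x ∧ x ^ 2 = 1} : Finset G).image (y * ·) ⊆
      ({x : G | x * y = y * x ∧ ¬x ^ 2 = 1} : Finset G) := by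
    intro x hx
    simp only [mem_image, mem_filter, mem_univ, true_and] at hx ⊢
    obtain ⟨x, ⟨hxy, hx2⟩, rfl⟩ := hx
    refine ⟨by rw [mul_assoc, hxy, ← mul_assoc], ?_⟩
    rwa [Commute.mul_pow hxy.symm, hx2, mul_one]
  -- both sides have `|G| / 4` elements
  have heq := eq_of_subset_of_card_le hsub
    (by rw [card_image_of_injective _ (mul_right_injective y)]; omega)
  have : z ∈ ({x : G | x * y = y * x ∧ ¬x ^ 2 = 1} : Finset G) := by
    simpa [hz] using (by_contra fun h ↦ hz (hout z h))
  rw [← heq] at this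
  simp only [mem_image, mem_filter, mem_univ, true_and] at this
  obtain ⟨x, ⟨hxy, hx2⟩, rfl⟩ := this
  rw [Commute.mul_pow hxy.symm, hx2, mul_one]

end Counting

theorem exists_sq_ne_one_of_card {G : Type*} [Group G] [Finite G]
    (hG : 4 * Nat.card {x : G // x ^ 2 = 1} = 3 * Nat.card G) : ∃ y : G, y ^ 2 ≠ 1 := by
  by_contra! h
  rw [Nat.card_congr (Equiv.subtypeUnivEquiv h)] at hG
  have := Nat.card_pos (α := G)
  omega

/-- The conclusion of Miller's counting argument, applied to every non-involution. -/
structure MillerCondition (G : Type*) [Group G] : Prop where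
  commute : ∀ y z : G, y ^ 2 ≠ 1 → z ^ 2 ≠ 1 → Commute y z
  sq_eq : ∀ y z : G, y ^ 2 ≠ 1 → z ^ 2 ≠ 1 → y ^ 2 = z ^ 2
  notMem_center : ∀ y : G, y ^ 2 ≠ 1 → y ∉ center G

namespace MillerCondition

variable {G : Type*} [Group G] {y a : G}

theorem of_card [Finite G] (hG : 4 * Nat.card {x : G // x ^ 2 = 1} = 3 * Nat.card G) :
    MillerCondition G := by
  have := Fintype.ofFinite G
  classical
  rw [Nat.card_eq_fintype_card, Fintype.card_subtype, Nat.card_eq_fintype_card] at hG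
  refine ⟨fun y z hy hz ↦ by_contra fun h ↦ hz ?_, fun y z hy hz ↦ sq_eq_of_card_sq_eq_one hG hz hy,
    fun y hy hyZ ↦ ?_⟩
  · exact (card_centralizer_of_card_sq_eq_one hG hy).2 z (Ne.symm h)
  · have h := (card_centralizer_of_card_sq_eq_one hG hy).1
    rw [Finset.filter_true_of_mem fun x _ ↦ mem_center_iff.mp hyZ x, Finset.card_univ] at h
    have := Fintype.card_pos (α := G)
    omega

theorem sq_eq_one_or_eq (hG : MillerCondition G) (hy : y ^ 2 ≠ 1) (g : G) :
    g ^ 2 = 1 ∨ g ^ 2 = y ^ 2 :=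
  or_iff_not_imp_left.mpr fun hg ↦ hG.sq_eq g y hg hy

theorem sq_sq_eq_one (hG : MillerCondition G) (y : G) : (y ^ 2) ^ 2 = 1 := by
  by_contra h
  have hy : y ^ 2 ≠ 1 := fun hy ↦ h (by rw [hy, one_pow])
  exact hy (mul_eq_right.mp (pow_two (y ^ 2) ▸ hG.sq_eq _ _ h hy))

theorem sq_mem_center (hG : MillerCondition G) (y : G) : y ^ 2 ∈ center G := by
  refine mem_center_iff.mpr fun g ↦ ?_
  by_cases hy : y ^ 2 = 1
  · simp [hy]
  have hconj : (g * y * g⁻¹) ^ 2 = g * y ^ 2 * g⁻¹ := conj_pow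
  have := hG.sq_eq _ _ (by rw [hconj]; exact mt conj_eq_one_iff.mp hy) hy
  rw [hconj] at this
  exact mul_inv_eq_iff_eq_mul.mp this

theorem mul_eq_of_not_commute (hG : MillerCondition G) (hy : y ^ 2 ≠ 1) {g x : G}
    (hgx : ¬Commute g x) : g * x = y ^ 2 * (x * g) :=
  (commute_or_mul_eq_mul_mul (hG.sq_mem_center y) (hG.sq_sq_eq_one y) (hG.sq_eq_one_or_eq hy) g
    x).resolve_left hgx

theorem commute_mul_of_not_commute (hG : MillerCondition G) (hy : y ^ 2 ≠ 1) {g t x : G}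
    (hg : ¬Commute g x) (ht : ¬Commute t x) : Commute (t * g) x := by
  have hc := mem_center_iff.mp (hG.sq_mem_center y)
  calc t * g * x = t * (y ^ 2 * (x * g)) := by rw [mul_assoc, hG.mul_eq_of_not_commute hy hg]
    _ = y ^ 2 * (t * x) * g := by rw [← mul_assoc, hc t]; simp only [mul_assoc]
    _ = (y ^ 2) ^ 2 * x * (t * g) := by
      rw [hG.mul_eq_of_not_commute hy ht, pow_two (y ^ 2)]; simp only [mul_assoc]
    _ = x * (t * g) := by rw [hG.sq_sq_eq_one, one_mul]

theorem commute_of_sq_ne_one (hG : MillerCondition G) (hy : y ^ 2 ≠ 1) {z q : G} (hz : z ^ 2 ≠ 1)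
    (hq : Commute q y) : Commute z q := by
  rcases sq_ne_one_or_mul_sq_ne_one hy hq with hq2 | hyq
  · exact hG.commute z q hz hq2
  · simpa using (hG.commute z y hz hy).inv_right.mul_right (hG.commute z _ hz hyq)

theorem commute_of_commute (hG : MillerCondition G) (hy : y ^ 2 ≠ 1) {p q : G} (hp : Commute p y)
    (hq : Commute q y) : Commute p q := by
  rcases sq_ne_one_or_mul_sq_ne_one hy hp with hp2 | hyp
  · exact hG.commute_of_sq_ne_one hy hp2 hq
  · simpa using hq.symm.inv_left.mul_left (hG.commute_of_sq_ne_one hy hyp hq)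

theorem mem_center_of_commute (hG : MillerCondition G) (hy : y ^ 2 ≠ 1) (ha : ¬Commute a y)
    {z : G} (hzy : Commute z y) (hza : Commute z a) : z ∈ center G := by
  refine mem_center_iff.mpr fun g ↦ show Commute g z from ?_
  by_cases hg : Commute g y
  · exact hG.commute_of_commute hy hg hzy
  · have hagz := hG.commute_of_commute hy (hG.commute_mul_of_not_commute hy hg ha) hzy
    simpa using hza.symm.inv_left.mul_left hagz

theorem pow_four_eq_one (hG : MillerCondition G) (y : G) : y ^ 4 = 1 := by
  rw [show 4 = 2 * 2 from rfl, pow_mul, hG.sq_sq_eq_one]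

theorem sq_eq_one_of_not_commute (hG : MillerCondition G) (hy : y ^ 2 ≠ 1) (ha : ¬Commute a y) :
    a ^ 2 = 1 :=
  by_contra fun h ↦ ha (hG.commute a y h hy)

theorem mul_mul_inv_eq_inv_of_not_commute (hG : MillerCondition G) (hy : y ^ 2 ≠ 1)
    (ha : ¬Commute a y) : a * y * a⁻¹ = y⁻¹ := by
  rw [hG.mul_eq_of_not_commute hy ha, ← mul_assoc, mul_inv_cancel_right, eq_inv_iff_mul_eq_one,
    ← pow_succ, ← pow_succ, hG.pow_four_eq_one]

def dihedralHom (hG : MillerCondition G) (hy : y ^ 2 ≠ 1) (ha : ¬Commute a y) :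
    DihedralGroup 4 →* G :=
  _root_.dihedralHom y a (hG.pow_four_eq_one y) (hG.sq_eq_one_of_not_commute hy ha)
    (hG.mul_mul_inv_eq_inv_of_not_commute hy ha)

theorem dihedralHom_r_one (hG : MillerCondition G) (hy : y ^ 2 ≠ 1) (ha : ¬Commute a y) :
    hG.dihedralHom hy ha (.r 1) = y :=
  pow_one y

theorem dihedralHom_sr_zero (hG : MillerCondition G) (hy : y ^ 2 ≠ 1) (ha : ¬Commute a y) :
    hG.dihedralHom hy ha (.sr 0) = a := by
  simp [MillerCondition.dihedralHom]

theorem dihedralHom_injective (hG : MillerCondition G) (hy : y ^ 2 ≠ 1) (ha : ¬Commute a y) :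
    Function.Injective (hG.dihedralHom hy ha) :=
  _root_.dihedralHom_injective _ _ _
    (orderOf_eq_prime_pow (p := 2) (n := 1) hy (hG.pow_four_eq_one y)) ha

theorem dihedralHom_mem_center_iff (hG : MillerCondition G) (hy : y ^ 2 ≠ 1) (ha : ¬Commute a y)
    (d : DihedralGroup 4) : hG.dihedralHom hy ha d ∈ center G ↔ d = 1 ∨ d = .r 2 := by
  constructor
  · intro hd
    have hcomm : ∀ x, d * x = x * d := fun x ↦ hG.dihedralHom_injective hy ha <| by
      rw [map_mul, map_mul, mem_center_iff.mp hd]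
    exact DihedralGroup.eq_one_or_eq_r_two_of_commute (hcomm _) (hcomm _)
  · rintro (rfl | rfl)
    · exact (map_one (hG.dihedralHom hy ha)).symm ▸ one_mem _
    · exact hG.sq_mem_center y

theorem exists_dihedralHom_mul_mem_center (hG : MillerCondition G) (hy : y ^ 2 ≠ 1)
    (ha : ¬Commute a y) (g : G) : ∃ d, hG.dihedralHom hy ha d * g ∈ center G := by
  set f := hG.dihedralHom hy ha
  obtain ⟨e, he⟩ : ∃ e, Commute (f e * g) y := by
    by_cases hg : Commute g y
    · exact ⟨1, by rwa [map_one, one_mul]⟩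
    · exact ⟨.sr 0, hG.dihedralHom_sr_zero hy ha ▸ hG.commute_mul_of_not_commute hy hg ha⟩
  obtain ⟨d, hdy, hda⟩ : ∃ d, Commute (f d * (f e * g)) y ∧ Commute (f d * (f e * g)) a := by
    by_cases hg : Commute (f e * g) a
    · exact ⟨1, by rwa [map_one, one_mul], by rwa [map_one, one_mul]⟩
    · refine ⟨.r 1, ?_, ?_⟩ <;> rw [hG.dihedralHom_r_one hy ha]
      · exact (Commute.refl y).mul_left he
      · exact hG.commute_mul_of_not_commute hy hg (fun h ↦ ha h.symm)
  exact ⟨d * e, by rw [map_mul, mul_assoc]; exact hG.mem_center_of_commute hy ha hdy hda⟩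

theorem exists_mulEquiv [Finite G] (hG : MillerCondition G) (hy : y ^ 2 ≠ 1) :
    ∃ k, Nonempty (G ≃* DihedralGroup 4 × Multiplicative (Fin k → ZMod 2)) := by
  obtain ⟨a, ha⟩ : ∃ a, ¬Commute a y := by
    simpa [mem_center_iff, Commute, SemiconjBy] using hG.notMem_center y hy
  exact exists_mulEquiv_prod_of_center (hG.dihedralHom hy ha) (hG.dihedralHom_injective hy ha)
    (by decide) (hG.dihedralHom_mem_center_iff hy ha) (hG.exists_dihedralHom_mul_mem_center hy ha)
    fun z hz ↦ by_contra fun h ↦ hG.notMem_center z h hz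

end MillerCondition

theorem eq_case_miller_general (G : Type*) [Group G] [Finite G]
    (heq : 4 * Nat.card {x : G // x ^ 2 = 1} = 3 * Nat.card G) :
    ∃ k : ℕ, Nonempty (G ≃* DihedralGroup 4 × Multiplicative (Fin k → ZMod 2)) := by
  obtain ⟨y, hy⟩ := exists_sq_ne_one_of_card heq
  exact (MillerCondition.of_card heq).exists_mulEquiv hy

/-- Equality case of Miller's bound: if a finite group `G` is not isomorphic to any
elementary abelian 2-group and the number `i₂(G)` of elements of order at most 2
satisfies `i₂(G) = (3/4)·|G|`, then `G ≅ D₈ × C₂ᵏ` for some `k ≥ 0`,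
where `D₈` is the dihedral group of order 8. -/
theorem eq_case_miller (G : Type*) [Group G] [Finite G]
    (h : ¬ ∃ k : ℕ, Nonempty (G ≃* Multiplicative (Fin k → ZMod 2)))
    (heq : 4 * Nat.card {x : G // x ^ 2 = 1} = 3 * Nat.card G) :
    ∃ k : ℕ, Nonempty (G ≃* DihedralGroup 4 × Multiplicative (Fin k → ZMod 2)) :=
  eq_case_miller_general G heq
end

section
/- Let G be a finite group, let c(G) denote the number of cyclic subgroups of G, and define Δ(G) = |G| − c(G). If Δ(G) = δ > 0, then |G| ≤ 8δ. -/
open Finset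

section Helpers

variable {G : Type*} [Group G]

lemma my_zpowers_isCyclic (g : G) : IsCyclic (Subgroup.zpowers g) := by
  refine ⟨⟨⟨g, Subgroup.mem_zpowers g⟩, fun x => ?_⟩⟩
  obtain ⟨k, hk⟩ := x.2
  exact ⟨k, Subtype.ext (by simpa using hk)⟩

lemma my_exists_zpowers_eq (H : Subgroup G) (h : IsCyclic H) :
    ∃ g : G, Subgroup.zpowers g = H := by
  obtain ⟨⟨g, hg⟩, hgen⟩ := h.exists_generator
  refine ⟨g, le_antisymm ?_ ?_⟩
  · simpa [Subgroup.zpowers_le] using hg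
  · intro x hx
    obtain ⟨k, hk⟩ := hgen ⟨x, hx⟩
    exact ⟨k, congrArg Subtype.val hk⟩

/-- if an element is a power of an involution it is `1` or the involution. -/
lemma mem_zpowers_of_sq {g h : G} (hh : h * h = 1) (hg : g ∈ Subgroup.zpowers h) :
    g = 1 ∨ g = h := by
  obtain ⟨k, hk⟩ := hg
  have hk' : h ^ k = g := hk
  have h2 : h ^ (2 : ℤ) = 1 := by
    rw [show (2:ℤ) = ((2:ℕ):ℤ) by norm_num, zpow_natCast, pow_two, hh]
  rcases Int.even_or_odd k with ⟨m, hm⟩ | ⟨m, hm⟩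
  · left
    rw [← hk', hm, show m + m = 2 * m by ring, zpow_mul, h2, one_zpow]
  · right
    rw [← hk', hm, zpow_add, zpow_mul, h2, one_zpow, one_mul, zpow_one]

lemma big_subgroup_eq_top [Finite G] (H : Subgroup G)
    (h : Nat.card G < 2 * Nat.card H) : H = ⊤ := by
  obtain ⟨k, hk⟩ := Subgroup.card_subgroup_dvd_card H
  have hpos : 0 < Nat.card H := Nat.card_pos
  have hk1 : k = 1 := by nlinarith [Nat.card_pos (α := G)]
  rw [hk1, mul_one] at hk
  exact Subgroup.eq_top_of_card_eq H hk.symm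

lemma three_quarters {G : Type*} [Group G] [Fintype G] [DecidableEq G]
    (h : 3 * Fintype.card G < 4 * (univ.filter (fun x : G => x * x = 1)).card) :
    ∀ x : G, x * x = 1 := by
  classical
  set A : Finset G := univ.filter (fun x : G => x * x = 1) with hA
  -- step 1 : every involution is central
  have central : ∀ x ∈ A, ∀ y : G, x * y = y * x := by
    intro x hxA y
    have hx : x * x = 1 := (mem_filter.mp hxA).2
    set B : Finset G := A.image (fun y => x * y) with hB
    have hcardB : B.card = A.card := Finset.card_image_of_injective _ (mul_right_injective x)
    have hsub : (A ∩ B : Finset G) ⊆ univ.filter (· ∈ Subgroup.centralizer {x}) := by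
      intro z hz
      rw [Finset.mem_inter] at hz
      have hz1 : z * z = 1 := (mem_filter.mp hz.1).2
      obtain ⟨s, hsA, hs⟩ := Finset.mem_image.mp hz.2
      have hs1 : s * s = 1 := (mem_filter.mp hsA).2
      have hxz : (x * z) * (x * z) = 1 := by
        rw [← hs, show x * (x * s) * (x * (x * s)) = (x*x) * s * ((x*x) * s) by group, hx]
        simpa using hs1
      -- from (xz)² = 1, x² = 1, z² = 1 deduce commutation
      have hcomm : z * x = x * z := by
        have hinv : (x * z)⁻¹ = x * z := inv_eq_of_mul_eq_one_right hxz
        have : z⁻¹ * x⁻¹ = x * z := by rw [← mul_inv_rev]; exact hinv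
        rw [inv_eq_of_mul_eq_one_right hz1, inv_eq_of_mul_eq_one_right hx] at this
        exact this
      simp only [mem_filter, mem_univ, true_and]
      exact Subgroup.mem_centralizer_singleton_iff.mpr hcomm
    have hunion : (A ∪ B).card ≤ Fintype.card G := by
      simpa using Finset.card_le_univ (A ∪ B)
    have hie : (A ∩ B).card + (A ∪ B).card = A.card + B.card :=
      Finset.card_inter_add_card_union A B
    have hcent : (A ∩ B).card ≤ Nat.card (Subgroup.centralizer ({x} : Set G)) := by
      rw [Nat.card_eq_fintype_card, Fintype.card_subtype]
      exact Finset.card_le_card hsub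
    have htop : Subgroup.centralizer ({x} : Set G) = ⊤ := by
      apply big_subgroup_eq_top
      rw [Nat.card_eq_fintype_card (α := G)]
      omega
    have : y ∈ Subgroup.centralizer ({x} : Set G) := htop ▸ Subgroup.mem_top y
    exact (Subgroup.mem_centralizer_singleton_iff.mp this).symm
  -- step 2 : the involutions form a subgroup
  set H : Subgroup G :=
    { carrier := {x : G | x * x = 1}
      one_mem' := by simp
      mul_mem' := by
        intro a b ha hb
        have hc : a * b = b * a := central a (by simpa [hA] using ha) b
        have : (a * b) * (a * b) = (a * a) * (b * b) := by
          rw [show (a*b)*(a*b) = a * (b*a) * b by group, ← hc]; group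
        simp only [Set.mem_setOf_eq] at ha hb ⊢
        rw [this, ha, hb, one_mul]
      inv_mem' := by
        intro a ha
        simp only [Set.mem_setOf_eq] at ha ⊢
        rw [inv_eq_of_mul_eq_one_right ha]
        exact ha } with hH
  have hcardH : Nat.card H = A.card := by
    rw [Nat.card_eq_fintype_card, Fintype.card_subtype]
    congr 1
    ext x
    simp only [hA, mem_filter, mem_univ, true_and]
    exact Iff.rfl
  have htop : H = ⊤ := by
    apply big_subgroup_eq_top
    rw [Nat.card_eq_fintype_card (α := G), hcardH]
    omega
  intro x
  have : x ∈ H := htop ▸ Subgroup.mem_top x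
  exact this

end Helpers

/-- Main theorem: if `G` is a finite group with `Δ(G) = |G| − c(G) = δ > 0`,
where `c(G)` is the number of cyclic subgroups of `G`, then `|G| ≤ 8δ`. -/
theorem card_le_eight_mul_delta (G : Type*) [Group G] [Finite G] (δ : ℤ)
    (hΔ : (Nat.card G : ℤ) - Nat.card {H : Subgroup G // IsCyclic H} = δ)
    (hδ : 0 < δ) :
    (Nat.card G : ℤ) ≤ 8 * δ := by
  classical
  haveI : Fintype G := Fintype.ofFinite G
  haveI : Fintype {H : Subgroup G // IsCyclic H} := Fintype.ofFinite _
  set B := {H : Subgroup G // IsCyclic H}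
  set f : G → B := fun g => ⟨Subgroup.zpowers g, my_zpowers_isCyclic g⟩ with hf
  have hsurj : Function.Surjective f := by
    rintro ⟨H, hH⟩
    obtain ⟨g, hg⟩ := my_exists_zpowers_eq H hH
    exact ⟨g, Subtype.ext hg⟩
  set n := Fintype.card G with hn
  set c := Fintype.card B with hc
  have hcn : c ≤ n := Fintype.card_le_of_surjective f hsurj
  set M : Finset G := univ.filter (fun g : G => g * g ≠ 1) with hM
  -- fiberwise counting
  have h1 : n = ∑ b : B, (univ.filter (fun g => f g = b)).card := by
    rw [hn, ← Finset.card_univ]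
    exact Finset.card_eq_sum_card_fiberwise (fun x _ => mem_univ _)
  have h2 : M.card = ∑ b : B, (M.filter (fun g => f g = b)).card :=
    Finset.card_eq_sum_card_fiberwise (fun x _ => mem_univ _)
  have key : ∀ b : B, (M.filter (fun g => f g = b)).card + 2
      ≤ 2 * (univ.filter (fun g => f g = b)).card := by
    intro b
    set F : Finset G := univ.filter (fun g => f g = b) with hF
    obtain ⟨g0, hg0⟩ := hsurj b
    have hg0F : g0 ∈ F := by simp [hF, hg0]
    by_cases hbad : ∃ g ∈ F, g * g ≠ 1
    · obtain ⟨g, hgF, hg⟩ := hbad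
      have hgz : f g = b := (mem_filter.mp hgF).2
      -- every element of the fiber is a non-involution
      have heq : M.filter (fun g => f g = b) = F := by
        apply Finset.Subset.antisymm
        · intro z hz
          simp only [hM, mem_filter, mem_univ, true_and] at hz
          simp [hF, hz.2]
        · intro z hzF
          have hzz : f z = b := (mem_filter.mp hzF).2
          have hzp : Subgroup.zpowers z = Subgroup.zpowers g :=
            congrArg Subtype.val (hzz.trans hgz.symm)
          have hz1 : z * z ≠ 1 := by
            intro hz1
            have hgm : g ∈ Subgroup.zpowers z := by
              rw [hzp]; exact Subgroup.mem_zpowers g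
            rcases mem_zpowers_of_sq hz1 hgm with h | h
            · exact hg (by rw [h, one_mul])
            · exact hg (by rw [h, hz1])
          simp [hM, mem_filter, hz1, hzz]
      -- the fiber has at least two elements
      have hFcard : 2 ≤ F.card := by
        have hginv : g⁻¹ ∈ F := by
          have : f g⁻¹ = f g := by
            simp [hf, Subtype.ext_iff, Subgroup.zpowers_inv]
          simp [hF, this, hgz]
        have hne : g ≠ g⁻¹ := by
          intro h
          have := mul_inv_cancel g
          rw [← h] at this
          exact hg this
        exact Finset.one_lt_card.mpr ⟨g, hgF, g⁻¹, hginv, hne⟩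
      rw [heq]
      omega
    · push_neg at hbad
      have heq : M.filter (fun g => f g = b) = ∅ := by
        apply Finset.eq_empty_of_forall_notMem
        intro z hz
        simp only [hM, mem_filter, mem_univ, true_and] at hz
        exact hz.1 (hbad z (by simp [hF, hz.2]))
      rw [heq]
      have : 1 ≤ F.card := Finset.card_pos.mpr ⟨g0, hg0F⟩
      simp only [Finset.card_empty]
      omega
  have hsum : M.card + 2 * c ≤ 2 * n := by
    have := Finset.sum_le_sum (fun b (_ : b ∈ (univ : Finset B)) => key b)
    rw [Finset.sum_add_distrib, Finset.sum_const, ← h2] at this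
    rw [← Finset.mul_sum, ← h1] at this
    simpa [hc, mul_comm] using this
  have hΔ' : (n : ℤ) - c = δ := by
    rw [hn, hc, ← Nat.card_eq_fintype_card, ← Nat.card_eq_fintype_card]
    exact hΔ
  have hgoal : (Nat.card G : ℤ) = (n : ℤ) := by rw [hn, Nat.card_eq_fintype_card]
  rw [hgoal]
  by_cases hm : n ≤ 4 * M.card
  · omega
  · -- more than 3/4 of elements are involutions: contradiction
    push_neg at hm
    exfalso
    have hAM : (univ.filter (fun x : G => x * x = 1)).card + M.card = n := by
      rw [hn, ← Finset.card_univ, hM]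
      simpa using Finset.card_filter_add_card_filter_not
        (s := (univ : Finset G)) (p := fun x : G => x * x = 1)
    have h34 : 3 * Fintype.card G < 4 * (univ.filter (fun x : G => x * x = 1)).card := by
      rw [← hn]; omega
    have hall := three_quarters h34
    -- then g ↦ ⟨g⟩ is injective, so c = n and δ = 0
    have hinj : Function.Injective f := by
      intro a b hab
      have hzp : Subgroup.zpowers a = Subgroup.zpowers b :=
        congrArg Subtype.val hab
      have ha : a ∈ Subgroup.zpowers b := by rw [← hzp]; exact Subgroup.mem_zpowers a
      rcases mem_zpowers_of_sq (hall b) ha with h | h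
      · subst h
        have hb : b ∈ Subgroup.zpowers (1 : G) := by rw [hzp]; exact Subgroup.mem_zpowers b
        rcases mem_zpowers_of_sq (by simp) hb with h' | h' <;> simp [h']
      · exact h
    have : c = n := (Fintype.card_of_bijective ⟨hinj, hsurj⟩).symm
    omega
end

section
/- For every integer k ≥ 0, the group G = D₈ × C₂ᵏ (the direct product of the dihedral group of order 8 with k copies of the cyclic group of order 2) satisfies Δ(G) = 2ᵏ, where Δ(G) = |G| − c(G) and c(G) is the number of cyclic subgroups of G. In particular |G| = 8·Δ(G). -/
/-!
In a group of exponent dividing 4 the generators of a cyclic subgroup `⟨g⟩` are exactly `g` and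
`g⁻¹`, which coincide iff `g² = 1`. Counting the fibres of `g ↦ ⟨g⟩` therefore gives
`2 c(G) = |G| + #{g | g² = 1}`. For `G = D₈ × C₂ᵏ` this is `8·2ᵏ + 6·2ᵏ`, since six elements
of `D₈` square to `1`, so `c(G) = 7·2ᵏ`.
-/

open Finset Subgroup

section ExponentFour

variable {G : Type*} [Group G]

theorem zpowers_eq_zpowers_iff_of_pow_four_eq_one {g h : G} (hg : g ^ 4 = 1) :
    zpowers h = zpowers g ↔ h = g ∨ h = g⁻¹ := by
  refine ⟨fun hgh => ?_, ?_⟩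
  · obtain ⟨n, rfl⟩ : ∃ n : ℕ, g ^ n = h :=
      (isOfFinOrder_iff_pow_eq_one.2 ⟨4, by norm_num, hg⟩).mem_powers_iff_mem_zpowers.2
        (hgh ▸ mem_zpowers h)
    have hn : g ^ n = g ^ (n % 4) := by
      conv_lhs => rw [← Nat.mod_add_div n 4, pow_add, pow_mul, hg, one_pow, mul_one]
    rw [hn] at hgh ⊢
    have : n % 4 < 4 := Nat.mod_lt _ (by norm_num)
    interval_cases n % 4
    · have hg1 : g = 1 := zpowers_eq_bot.1 (by rw [← hgh, pow_zero, zpowers_one_eq_bot])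
      simp [hg1]
    · simp
    · obtain ⟨j, hj⟩ : ∃ j : ℤ, (g ^ 2) ^ j = g := mem_zpowers_iff.1 (hgh ▸ mem_zpowers g)
      have hg2 : g ^ 2 = 1 := by
        calc g ^ 2 = ((g ^ 2) ^ j) ^ 2 := by rw [hj]
          _ = (g ^ 4) ^ j := by group
          _ = 1 := by rw [hg, one_zpow]
      have hg1 : g = 1 := zpowers_eq_bot.1 (by rw [← hgh, hg2, zpowers_one_eq_bot])
      simp [hg1]
    · exact Or.inr (eq_inv_of_mul_eq_one_left (by rw [← pow_succ, hg]))
  · rintro (rfl | rfl)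
    · rfl
    · exact zpowers_inv

variable [Fintype G]

open scoped Classical in
theorem card_filter_zpowers_eq_add_card_filter_sq_eq_one {g : G} (hg : g ^ 4 = 1) :
    #{h | zpowers h = zpowers g} + #{h | zpowers h = zpowers g ∧ h ^ 2 = 1} = 2 := by
  have hfib : ({h | zpowers h = zpowers g} : Finset G) = {g, g⁻¹} := by
    ext h
    simp [zpowers_eq_zpowers_iff_of_pow_four_eq_one hg]
  rw [← filter_filter, hfib]
  by_cases hg2 : g ^ 2 = 1
  · rw [inv_eq_of_mul_eq_one_right (by rwa [← sq]), pair_eq_singleton, filter_singleton]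
    simp [hg2]
  · have hne : g ≠ g⁻¹ := fun h => hg2 (by rwa [sq, ← eq_inv_iff_mul_eq_one])
    rw [card_pair hne, filter_eq_empty_iff.2 (by simp [hg2, inv_pow])]
    rfl

end ExponentFour

theorem two_mul_card_isCyclic_subgroup {G : Type*} [Group G] [Finite G]
    (hG : ∀ g : G, g ^ 4 = 1) :
    2 * Nat.card {H : Subgroup G // IsCyclic H} = Nat.card G + Nat.card {g : G // g ^ 2 = 1} := by
  classical
  cases nonempty_fintype G
  let cyclics := univ.image (zpowers : G → Subgroup G)
  have hcyclic : Nat.card {H : Subgroup G // IsCyclic H} = #cyclics := by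
    rw [← Nat.card_eq_finsetCard]
    exact Nat.card_congr <| Equiv.subtypeEquivRight fun H => by
      simp [cyclics, H.isCyclic_iff_exists_zpowers_eq_top]
  have hG_sum : Nat.card G = ∑ H ∈ cyclics, #{g | zpowers g = H} := by
    rw [Nat.card_eq_fintype_card, ← card_univ]
    exact card_eq_sum_card_image _ _
  have hsq_sum :
      Nat.card {g : G // g ^ 2 = 1} = ∑ H ∈ cyclics, #{g | zpowers g = H ∧ g ^ 2 = 1} := by
    rw [Nat.card_eq_fintype_card, Fintype.card_subtype,
      card_eq_sum_card_fiberwise (f := zpowers) (t := cyclics)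
      fun g _ => mem_image_of_mem _ (mem_univ g)]
    simp only [filter_filter, and_comm]
  rw [hcyclic, hG_sum, hsq_sum, ← sum_add_distrib, mul_comm, ← smul_eq_mul, ← sum_const]
  refine (sum_congr rfl fun H hH => ?_).symm
  obtain ⟨g, -, rfl⟩ := mem_image.1 hH
  exact card_filter_zpowers_eq_add_card_filter_sq_eq_one (hG g)

theorem Multiplicative.sq_eq_one_of_module_zmod_two {M : Type*} [AddCommGroup M]
    [Module (ZMod 2) M] (x : Multiplicative M) : x ^ 2 = 1 :=
  congrArg Multiplicative.ofAdd (ZModModule.char_nsmul_eq_zero 2 x.toAdd)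

theorem Prod.card_sq_eq_one {A B : Type*} [Monoid A] [Monoid B] :
    Nat.card {g : A × B // g ^ 2 = 1} =
      Nat.card {a : A // a ^ 2 = 1} * Nat.card {b : B // b ^ 2 = 1} := by
  rw [← Nat.card_prod {a : A // a ^ 2 = 1} {b : B // b ^ 2 = 1}]
  exact Nat.card_congr <| (Equiv.subtypeEquivRight fun _ => Prod.ext_iff).trans
    (Equiv.subtypeProdEquivProd (p := fun a : A => a ^ 2 = 1) (q := fun b : B => b ^ 2 = 1))

/-- For every `k ≥ 0`, the group `G = D₈ × C₂ᵏ` satisfies `Δ(G) = 2ᵏ`, where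
`Δ(G) = |G| − c(G)` and `c(G)` is the number of cyclic subgroups of `G`.
In particular `|G| = 8·Δ(G)`. -/
theorem delta_dihedral_prod_elemAbelian (k : ℕ) :
    ((Nat.card (DihedralGroup 4 × Multiplicative (Fin k → ZMod 2)) : ℤ)
        - Nat.card {H : Subgroup (DihedralGroup 4 × Multiplicative (Fin k → ZMod 2)) //
            IsCyclic H} = 2 ^ k) ∧
      Nat.card (DihedralGroup 4 × Multiplicative (Fin k → ZMod 2)) = 8 * 2 ^ k := by
  have hB : ∀ b : Multiplicative (Fin k → ZMod 2), b ^ 2 = 1 :=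
    Multiplicative.sq_eq_one_of_module_zmod_two
  have hcard : Nat.card (DihedralGroup 4 × Multiplicative (Fin k → ZMod 2)) = 8 * 2 ^ k := by
    rw [Nat.card_prod, DihedralGroup.nat_card]
    simp
  have hpow_four : ∀ g : DihedralGroup 4 × Multiplicative (Fin k → ZMod 2), g ^ 4 = 1 :=
    fun g => Prod.ext ((by decide : ∀ a : DihedralGroup 4, a ^ 4 = 1) g.1)
      ((pow_mul g.2 2 2).trans (hB _))
  have hsq : Nat.card {g : DihedralGroup 4 × Multiplicative (Fin k → ZMod 2) // g ^ 2 = 1} =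
      6 * 2 ^ k := by
    rw [Prod.card_sq_eq_one, Nat.card_congr (Equiv.subtypeUnivEquiv hB), Nat.card_eq_fintype_card
      (α := {a : DihedralGroup 4 // a ^ 2 = 1}), show Fintype.card _ = 6 by decide]
    simp
  have hcyclic := two_mul_card_isCyclic_subgroup hpow_four
  rw [hcard, hsq, ← add_mul] at hcyclic
  refine ⟨?_, hcard⟩
  rw [hcard, show Nat.card _ = 7 * 2 ^ k by omega]
  push_cast
  ring
end

section
/- A finite group G has exactly |G| − 1 cyclic subgroups if and only if G is isomorphic to one of the following four groups: the cyclic group C₃ of order 3, the cyclic group C₄ of order 4, the symmetric group S₃ on three letters, or the dihedral group D₈ of order 8. -/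
/-!
Sending `g` to `zpowers g` maps `G` onto its set of cyclic subgroups. This map is injective on
the elements with `g ^ 2 = 1`, and the fibre through any `g` with `g ^ 2 ≠ 1` also contains
`g⁻¹ ≠ g`. Counting, `|G| - c(G) = 1` holds exactly when `G` has precisely two
elements with `g ^ 2 ≠ 1`, necessarily `g` and `g⁻¹`.

In that case `g` has order 3 or 4, and every `x ∉ ⟨g⟩` is an involution with `x g x⁻¹ = g⁻¹`: it
cannot centralise `g`, since then `(x g) ^ 2 = g ^ 2 ≠ 1` would force `x g ∈ ⟨g⟩`. Hence the
product of two elements outside `⟨g⟩` centralises `g` and lies in `⟨g⟩`, so `⟨g⟩` has index at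
most 2 and `G` is either cyclic or dihedral of order `2 · ord g`.
-/

open Subgroup Finset

section Counting

variable {G : Type*} [Group G]

theorem eq_one_or_eq_of_mem_zpowers_of_sq_eq_one {g x : G} (hg : g ^ 2 = 1)
    (hx : x ∈ zpowers g) : x = 1 ∨ x = g := by
  obtain ⟨k, rfl⟩ := mem_zpowers_iff.mp hx
  rw [zpow_eq_zpow_emod' k hg]
  rcases Int.emod_two_eq_zero_or_one k with h | h <;> simp [h]

theorem eq_of_zpowers_eq_of_sq_eq_one {g h : G} (hg : g ^ 2 = 1)
    (hgh : zpowers h = zpowers g) : h = g := by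
  rcases eq_one_or_eq_of_mem_zpowers_of_sq_eq_one hg (hgh ▸ mem_zpowers h) with rfl | rfl
  · rw [zpowers_one_eq_bot, eq_comm, zpowers_eq_bot] at hgh
    exact hgh.symm
  · rfl

theorem inv_ne_self_of_sq_ne_one {g : G} (hg : g ^ 2 ≠ 1) : g⁻¹ ≠ g := by
  rwa [Ne, inv_eq_iff_mul_eq_one, ← sq]

section Fintype

variable [Fintype G] [DecidableEq (Subgroup G)]

theorem nat_card_isCyclic_subgroup_eq_card_image_zpowers :
    Nat.card {H : Subgroup G // IsCyclic H} = #((univ : Finset G).image zpowers) := by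
  rw [← Fintype.card_coe, ← Nat.card_eq_fintype_card]
  exact Nat.card_congr <| Equiv.subtypeEquivRight fun H => by
    simp [Subgroup.isCyclic_iff_exists_zpowers_eq_top]

variable [DecidableEq G]

theorem card_image_zpowers_eq :
    #((univ : Finset G).image zpowers) =
      #{g : G | g ^ 2 = 1} + #(({g | g ^ 2 ≠ 1} : Finset G).image zpowers) := by
  have hinj : Set.InjOn zpowers (({g : G | g ^ 2 = 1} : Finset G) : Set G) :=
    fun g hg h _ hgh => (eq_of_zpowers_eq_of_sq_eq_one (by simpa using hg) hgh.symm).symm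
  rw [← card_image_of_injOn hinj, ← card_union_of_disjoint, ← image_union,
    filter_union_filter_not_eq]
  simp only [disjoint_left, mem_image, mem_filter, mem_univ, true_and]
  rintro _ ⟨g, hg, rfl⟩ ⟨h, hh, hgh⟩
  exact hh (eq_of_zpowers_eq_of_sq_eq_one hg hgh ▸ hg)

theorem two_mul_card_image_zpowers_le :
    2 * #(({g | g ^ 2 ≠ 1} : Finset G).image zpowers) ≤ #{g : G | g ^ 2 ≠ 1} := by
  refine mul_card_image_le_card _ 2 fun H hH => ?_
  obtain ⟨g, hg, rfl⟩ := mem_image.mp hH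
  have hg' : g ^ 2 ≠ 1 := (mem_filter.mp hg).2
  calc 2 = #{g⁻¹, g} := (card_pair (inv_ne_self_of_sq_ne_one hg')).symm
    _ ≤ _ := card_le_card (insert_subset_iff.mpr ⟨by simp [hg'], by simp [hg']⟩)

end Fintype

theorem nat_card_isCyclic_subgroup_eq_sub_one_iff [Finite G] :
    Nat.card {H : Subgroup G // IsCyclic H} = Nat.card G - 1 ↔
      Nat.card {g : G // g ^ 2 ≠ 1} = 2 := by
  classical
  have := Fintype.ofFinite G
  have hcard : Fintype.card G = #{g : G | g ^ 2 = 1} + #{g : G | g ^ 2 ≠ 1} :=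
    (card_filter_add_card_filter_not _).symm
  have hone : 1 ≤ #{g : G | g ^ 2 = 1} := card_pos.mpr ⟨1, by simp⟩
  have himage : #{g : G | g ^ 2 ≠ 1} ≠ 0 →
      #(({g | g ^ 2 ≠ 1} : Finset G).image zpowers) ≠ 0 :=
    fun h => card_ne_zero.mpr ((card_ne_zero.mp h).image _)
  have := two_mul_card_image_zpowers_le (G := G)
  rw [nat_card_isCyclic_subgroup_eq_card_image_zpowers, card_image_zpowers_eq,
    Nat.card_eq_fintype_card, Nat.card_eq_fintype_card, Fintype.card_subtype]
  omega

end Counting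

section Dihedral

variable {G : Type*} [Group G]

theorem conj_eq_inv_of_mem_zpowers {c t x : G} (htc : t * c * t⁻¹ = c⁻¹)
    (hx : x ∈ zpowers c) : t * x * t⁻¹ = x⁻¹ := by
  obtain ⟨k, rfl⟩ := mem_zpowers_iff.mp hx
  rw [← conj_zpow, htc, inv_zpow]

theorem nonempty_mulEquiv_dihedralGroup [Finite G] {n : ℕ} {c t : G}
    (hc : orderOf c = n) (ht : t ^ 2 = 1) (htc : t * c * t⁻¹ = c⁻¹) (htmem : t ∉ zpowers c)
    (hcard : Nat.card G = 2 * n) : Nonempty (DihedralGroup n ≃* G) := by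
  let ψ : Multiplicative (ZMod n) ≃* zpowers c :=
    zmodMulEquivOfGenerator (g := ⟨c, mem_zpowers c⟩) (fun ⟨x, hx⟩ => by
      obtain ⟨k, rfl⟩ := mem_zpowers_iff.mp hx
      exact ⟨k, Subtype.ext (by simp)⟩) (by rw [Nat.card_zpowers, hc])
  let φ : ZMod n → G := fun i => ψ (.ofAdd i)
  have hφ_mem (i : ZMod n) : φ i ∈ zpowers c := (ψ _).2
  have hφ_add (i j : ZMod n) : φ (i + j) = φ i * φ j := by simp [φ, ofAdd_add]
  have hφ_sub (i j : ZMod n) : φ (j - i) = (φ i)⁻¹ * φ j := by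
    simp [φ, sub_eq_neg_add, ofAdd_add, ofAdd_neg]
  have hφ_inj : Function.Injective φ := fun i j h =>
    Multiplicative.ofAdd.injective (ψ.injective (Subtype.ext h))
  have ht_inv : t⁻¹ = t := inv_eq_iff_mul_eq_one.mpr (by rw [← sq, ht])
  have hφt (i : ZMod n) : φ i * t = t * (φ i)⁻¹ := by
    rw [← conj_eq_inv_of_mem_zpowers htc (hφ_mem i), ht_inv, ← mul_assoc, ← mul_assoc, ← sq,
      ht, one_mul]
  let f : DihedralGroup n → G
    | .r i => φ i
    | .sr i => t * φ i
  have hf_mul (a b : DihedralGroup n) : f (a * b) = f a * f b := by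
    rcases a with i | i <;> rcases b with j | j
    · exact hφ_add i j
    · show t * φ (j - i) = φ i * (t * φ j)
      rw [hφ_sub, ← mul_assoc, ← hφt, mul_assoc]
    · show t * φ (i + j) = t * φ i * φ j
      rw [hφ_add, mul_assoc]
    · show φ (j - i) = t * φ i * (t * φ j)
      rw [hφ_sub, mul_assoc, ← mul_assoc (φ i), hφt, ← mul_assoc, ← mul_assoc, ← sq, ht,
        one_mul]
  have hf_inj : Function.Injective f := by
    rintro (i | i) (j | j) h
    · exact congrArg _ (hφ_inj h)
    · exact absurd (eq_mul_inv_of_mul_eq h.symm ▸ mul_mem (hφ_mem i) (inv_mem (hφ_mem j))) htmem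
    · exact absurd (eq_mul_inv_of_mul_eq h ▸ mul_mem (hφ_mem j) (inv_mem (hφ_mem i))) htmem
    · exact congrArg _ (hφ_inj (mul_left_cancel h))
  exact ⟨MulEquiv.ofBijective (MonoidHom.mk' f hf_mul)
    ((Nat.bijective_iff_injective_and_card _).mpr
      ⟨hf_inj, by rw [DihedralGroup.nat_card, hcard]⟩)⟩

end Dihedral

theorem Equiv.Perm.nonempty_dihedralGroup_three_mulEquiv :
    Nonempty (DihedralGroup 3 ≃* Equiv.Perm (Fin 3)) := by
  have hc : orderOf (finRotate 3) = 3 := orderOf_eq_prime (by decide) (by decide)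
  refine nonempty_mulEquiv_dihedralGroup hc (t := Equiv.swap 0 1) (by decide) (by decide) ?_
    (by rw [Nat.card_perm, Nat.card_fin]; rfl)
  rw [mem_zpowers_iff_mem_range_orderOf, hc]
  decide

theorem MulEquiv.nat_card_sq_ne_one_eq {G H : Type*} [Group G] [Group H] (e : G ≃* H) :
    Nat.card {x : G // x ^ 2 ≠ 1} = Nat.card {y : H // y ^ 2 ≠ 1} :=
  Nat.card_congr <| e.toEquiv.subtypeEquiv fun x => by simp [← map_pow]

theorem exists_setOf_sq_ne_one_eq_pair {G : Type*} [Group G]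
    (h : Nat.card {x : G // x ^ 2 ≠ 1} = 2) : ∃ g : G, {x : G | x ^ 2 ≠ 1} = {g, g⁻¹} := by
  obtain ⟨a, b, -, hs⟩ :=
    Set.ncard_eq_two.mp ((Nat.card_coe_set_eq {x : G | x ^ 2 ≠ 1}).symm.trans h)
  have hb : b ^ 2 ≠ 1 := (Set.ext_iff.mp hs b).mpr (by simp)
  have hb_inv : b⁻¹ ^ 2 ≠ 1 := by rwa [inv_pow, inv_ne_one]
  obtain h | h : b⁻¹ = a ∨ b⁻¹ = b := (Set.ext_iff.mp hs b⁻¹).mp hb_inv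
  · exact ⟨a, by rw [hs, ← h, inv_inv]⟩
  · exact absurd h (inv_ne_self_of_sq_ne_one hb)

section ExactlyTwoElementsOfOrderGtTwo

variable {G : Type*} [Group G] {g x : G}

theorem eq_or_eq_inv_of_sq_ne_one (hG : {x : G | x ^ 2 ≠ 1} = {g, g⁻¹}) (hx : x ^ 2 ≠ 1) :
    x = g ∨ x = g⁻¹ :=
  (Set.ext_iff.mp hG x).mp hx

theorem sq_ne_one_of_setOf_sq_ne_one_eq (hG : {x : G | x ^ 2 ≠ 1} = {g, g⁻¹}) : g ^ 2 ≠ 1 :=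
  (Set.ext_iff.mp hG g).mpr (Set.mem_insert g _)

theorem mem_zpowers_of_sq_ne_one (hG : {x : G | x ^ 2 ≠ 1} = {g, g⁻¹}) (hx : x ^ 2 ≠ 1) :
    x ∈ zpowers g := by
  obtain rfl | rfl := eq_or_eq_inv_of_sq_ne_one hG hx
  exacts [mem_zpowers x, inv_mem (mem_zpowers _)]

theorem sq_eq_one_of_notMem_zpowers (hG : {x : G | x ^ 2 ≠ 1} = {g, g⁻¹})
    (hx : x ∉ zpowers g) : x ^ 2 = 1 :=
  not_not.mp (mt (mem_zpowers_of_sq_ne_one hG) hx)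

theorem mem_zpowers_of_commute (hG : {x : G | x ^ 2 ≠ 1} = {g, g⁻¹}) (hxg : Commute x g) :
    x ∈ zpowers g := by
  by_contra hx
  have hxg2 : (x * g) ^ 2 ≠ 1 := by
    rw [hxg.mul_pow, sq_eq_one_of_notMem_zpowers hG hx, one_mul]
    exact sq_ne_one_of_setOf_sq_ne_one_eq hG
  exact hx ((mul_mem_cancel_right (mem_zpowers g)).mp (mem_zpowers_of_sq_ne_one hG hxg2))

theorem conj_eq_inv_of_notMem_zpowers (hG : {x : G | x ^ 2 ≠ 1} = {g, g⁻¹})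
    (hx : x ∉ zpowers g) : x * g * x⁻¹ = g⁻¹ := by
  have hconj : (x * g * x⁻¹) ^ 2 ≠ 1 := by
    rw [conj_pow, Ne, conj_eq_one_iff]
    exact sq_ne_one_of_setOf_sq_ne_one_eq hG
  refine (eq_or_eq_inv_of_sq_ne_one hG hconj).resolve_left fun h => hx ?_
  exact mem_zpowers_of_commute hG (mul_inv_eq_iff_eq_mul.mp h)

theorem index_zpowers_eq_two (hG : {x : G | x ^ 2 ≠ 1} = {g, g⁻¹}) (hx : x ∉ zpowers g) :
    (zpowers g).index = 2 := by
  refine index_eq_two_iff_exists_notMem_and.mpr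
    ⟨x, hx, fun y => or_iff_not_imp_right.mpr fun hy => ?_⟩
  refine mem_zpowers_of_commute hG (mul_inv_eq_iff_eq_mul.mp ?_)
  calc y * x * g * (y * x)⁻¹ = y * (x * g * x⁻¹) * y⁻¹ := by group
    _ = (y * g * y⁻¹)⁻¹ := by rw [conj_eq_inv_of_notMem_zpowers hG hx]; group
    _ = g := by rw [conj_eq_inv_of_notMem_zpowers hG hy, inv_inv]

theorem orderOf_eq_three_or_four (hG : {x : G | x ^ 2 ≠ 1} = {g, g⁻¹}) :
    orderOf g = 3 ∨ orderOf g = 4 := by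
  have hg2 := sq_ne_one_of_setOf_sq_ne_one_eq hG
  have hg1 : orderOf g ≠ 1 := fun h => hg2 (by rw [orderOf_eq_one_iff.mp h, one_pow])
  have hndvd : ¬ orderOf g ∣ 2 := mt orderOf_dvd_iff_pow_eq_one.mp hg2
  by_cases hg4 : (g ^ 2) ^ 2 = 1
  · have hdvd : orderOf g ∣ 4 := orderOf_dvd_of_pow_eq_one (by rwa [← pow_mul] at hg4)
    have := Nat.le_of_dvd (by norm_num) hdvd
    interval_cases h : orderOf g <;> simp_all
  · obtain h | h := eq_or_eq_inv_of_sq_ne_one hG hg4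
    · exact absurd (by rw [sq, mul_eq_right] at h; rw [h, one_pow]) hg2
    · have hdvd : orderOf g ∣ 3 :=
        orderOf_dvd_of_pow_eq_one (by rw [pow_succ, h, inv_mul_cancel])
      exact .inl (((Nat.dvd_prime Nat.prime_three).mp hdvd).resolve_left hg1)

theorem nonempty_mulEquiv_zmod_or_dihedralGroup [Finite G]
    (hG : {x : G | x ^ 2 ≠ 1} = {g, g⁻¹}) :
    Nonempty (Multiplicative (ZMod (orderOf g)) ≃* G) ∨
      Nonempty (DihedralGroup (orderOf g) ≃* G) := by
  by_cases htop : zpowers g = ⊤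
  · exact .inl ⟨zmodMulEquivOfGenerator (fun x => htop ▸ mem_top x)
      (orderOf_eq_card_of_zpowers_eq_top htop).symm⟩
  · obtain ⟨t, ht⟩ : ∃ t, t ∉ zpowers g := by simpa [eq_top_iff'] using htop
    refine .inr (nonempty_mulEquiv_dihedralGroup rfl (sq_eq_one_of_notMem_zpowers hG ht)
      (conj_eq_inv_of_notMem_zpowers hG ht) ht ?_)
    rw [← (zpowers g).card_mul_index, Nat.card_zpowers, index_zpowers_eq_two hG ht, mul_comm]

end ExactlyTwoElementsOfOrderGtTwo

/-- T\u{a}rn\u{a}uceanu's theorem: a finite group `G` has exactly `|G| − 1` cyclic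
subgroups if and only if `G` is isomorphic to `C₃`, `C₄`, `S₃`, or `D₈`. -/
theorem card_cyclic_eq_card_sub_one_iff (G : Type*) [Group G] [Finite G] :
    Nat.card {H : Subgroup G // IsCyclic H} = Nat.card G - 1 ↔
      (Nonempty (G ≃* Multiplicative (ZMod 3)) ∨
       Nonempty (G ≃* Multiplicative (ZMod 4)) ∨
       Nonempty (G ≃* Equiv.Perm (Fin 3)) ∨
       Nonempty (G ≃* DihedralGroup 4)) := by
  rw [nat_card_isCyclic_subgroup_eq_sub_one_iff]
  constructor
  · intro h
    obtain ⟨g, hG⟩ := exists_setOf_sq_ne_one_eq_pair h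
    obtain ⟨σ⟩ := Equiv.Perm.nonempty_dihedralGroup_three_mulEquiv
    rcases orderOf_eq_three_or_four hG with hg | hg <;>
      rcases hg ▸ nonempty_mulEquiv_zmod_or_dihedralGroup hG with ⟨⟨e⟩⟩ | ⟨⟨e⟩⟩
    exacts [.inl ⟨e.symm⟩, .inr (.inr (.inl ⟨e.symm.trans σ⟩)), .inr (.inl ⟨e.symm⟩),
      .inr (.inr (.inr ⟨e.symm⟩))]
  · rintro (⟨⟨e⟩⟩ | ⟨⟨e⟩⟩ | ⟨⟨e⟩⟩ | ⟨⟨e⟩⟩) <;>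
      rw [e.nat_card_sq_ne_one_eq, Nat.card_eq_fintype_card] <;> decide
end
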